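/- arXiv:1002.4790 — 3 statements merged into one kernel-verified Lean document; each statement's English description precedes it below -/
import Mathlib

section
/- Let X be a compact metric space, μ a finite Borel measure on X, F a finite set of continuous complex-valued functions on X, and ε > 0. Then every point x ∈ X has an open neighborhood U such that μ(closure(U) \ U) = 0 and |f(y) − f(y')| < ε for all y, y' ∈ U and all f ∈ F. -/
/-! Around `x`, pick a radius `δ` below which every `f ∈ F` varies by less than `ε / 2` from
`f x`. The frontiers of the balls `ball x r` are pairwise disjoint, so for an s-finite measure
only countably many of them carry mass, and some `r < δ` gives a ball with null frontier. -/

open MeasureTheory Metric Filter Topology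

theorem exists_ball_forall_dist_lt_of_continuous {X Y ι : Type*} [PseudoMetricSpace X]
    [PseudoMetricSpace Y] (F : Finset ι) (f : ι → X → Y) (hf : ∀ i ∈ F, Continuous (f i))
    {ε : ℝ} (hε : 0 < ε) (x : X) :
    ∃ δ > 0, ∀ y ∈ ball x δ, ∀ i ∈ F, dist (f i y) (f i x) < ε := by
  have h : ∀ᶠ y in 𝓝 x, ∀ i ∈ F, dist (f i y) (f i x) < ε :=
    (eventually_all_finset F).2 fun i hi ↦
      (hf i hi).continuousAt (ball_mem_nhds (f i x) hε)
  exact Metric.eventually_nhds_iff_ball.1 h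

theorem exists_ball_null_frontier {X : Type*} [PseudoMetricSpace X] [MeasurableSpace X]
    [OpensMeasurableSpace X] (μ : Measure X) [SFinite μ] (x : X) {δ : ℝ} (hδ : 0 < δ) :
    ∃ r ∈ Set.Ioo 0 δ, μ (frontier (ball x r)) = 0 := by
  simpa only [thickening_singleton] using exists_null_frontier_thickening μ {x} hδ

theorem stmt2_general {X : Type*} [MetricSpace X] [MeasurableSpace X] [BorelSpace X]
    (μ : MeasureTheory.Measure X) [MeasureTheory.IsFiniteMeasure μ]
    (F : Finset C(X, ℂ)) (ε : ℝ) (hε : 0 < ε) (x : X) :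
    ∃ U : Set X, IsOpen U ∧ x ∈ U ∧ μ (closure U \ U) = 0 ∧
      ∀ y ∈ U, ∀ y' ∈ U, ∀ f ∈ F, ‖f y - f y'‖ < ε := by
  obtain ⟨δ, hδ, hosc⟩ := exists_ball_forall_dist_lt_of_continuous F (fun f ↦ f)
    (fun f _ ↦ f.continuous) (half_pos hε) x
  obtain ⟨r, ⟨hr, hrδ⟩, hnull⟩ := exists_ball_null_frontier μ x hδ
  refine ⟨ball x r, isOpen_ball, mem_ball_self hr, by rwa [← isOpen_ball.frontier_eq], ?_⟩
  intro y hy y' hy' f hf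
  have hy := hosc y (ball_subset_ball hrδ.le hy) f hf
  have hy' := hosc y' (ball_subset_ball hrδ.le hy') f hf
  calc ‖f y - f y'‖ = dist (f y) (f y') := (dist_eq_norm _ _).symm
    _ ≤ dist (f y) (f x) + dist (f y') (f x) := dist_triangle_right _ _ _
    _ < ε / 2 + ε / 2 := add_lt_add hy hy'
    _ = ε := add_halves ε

/-- On a compact metric space with a finite Borel measure, every point has
an open neighborhood whose boundary is null and on which each function of a given finite
family of continuous complex-valued functions oscillates by less than `ε`. -/
theorem stmt2 {X : Type*} [MetricSpace X] [CompactSpace X] [MeasurableSpace X] [BorelSpace X]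
    (μ : MeasureTheory.Measure X) [MeasureTheory.IsFiniteMeasure μ]
    (F : Finset C(X, ℂ)) (ε : ℝ) (hε : 0 < ε) (x : X) :
    ∃ U : Set X, IsOpen U ∧ x ∈ U ∧ μ (closure U \ U) = 0 ∧
      ∀ y ∈ U, ∀ y' ∈ U, ∀ f ∈ F, ‖f y - f y'‖ < ε :=
  stmt2_general μ F ε hε x
end

section
/- Let A be a unital C*-algebra whose only closed two-sided ideals are {0} and A, and let h ∈ A be a nonzero positive element. Then there exists ν > 0 such that τ(h) ≥ ν for every tracial state τ of A. -/
/-!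
Simplicity forces the two-sided ideal generated by `h` to be dense, hence (as it then contains an
element within distance `1` of `1`, which is invertible) to be everything, so
`1 = ∑ xᵢ h yᵢ`. Writing `h = k²` with `k` self-adjoint, the trace property gives
`τ (x h y) = τ (k (y x) k)`, whose real part is squeezed between `∓‖ℜ (y x)‖ τ h` because
`-‖v‖ ≤ v ≤ ‖v‖` for self-adjoint `v`. Summing, `1 = τ 1 ≤ C τ h` with `C` independent of `τ`.
-/

open ComplexOrder ComplexStarModule

namespace TwoSidedIdeal

section Topological

variable {R : Type*} [TopologicalSpace R] [Ring R] [IsTopologicalRing R]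

protected def closure (I : TwoSidedIdeal R) : TwoSidedIdeal R :=
  .mk' (_root_.closure I) (subset_closure I.zero_mem)
    (fun hx hy ↦ map_mem_closure₂ continuous_add hx hy fun _ ha _ hb ↦ I.add_mem ha hb)
    (fun hx ↦ map_mem_closure continuous_neg hx fun _ ha ↦ I.neg_mem ha)
    (fun {x _} hy ↦ map_mem_closure (continuous_const_mul x) hy fun _ ha ↦ I.mul_mem_left x _ ha)
    (fun {_ y} hx ↦
      map_mem_closure (f := (· * y)) (continuous_mul_const y) hx fun _ ha ↦ I.mul_mem_right _ y ha)

@[simp]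
theorem coe_closure (I : TwoSidedIdeal R) : (I.closure : Set R) = closure I := by
  rw [TwoSidedIdeal.closure, coe_mk']

end Topological

theorem eq_top_of_ne_bot_of_forall_isClosed {R : Type*} [NormedRing R] [HasSummableGeomSeries R]
    (hsimple : ∀ I : TwoSidedIdeal R, IsClosed (I : Set R) → I = ⊥ ∨ I = ⊤)
    {I : TwoSidedIdeal R} (hI : I ≠ ⊥) : I = ⊤ := by
  have hclosure : I.closure = ⊤ := by
    refine (hsimple I.closure (by simp [isClosed_closure])).resolve_left fun hbot ↦ hI ?_
    refine le_bot_iff.1 (hbot ▸ fun x hx ↦ ?_)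
    rw [← SetLike.mem_coe, coe_closure]
    exact subset_closure hx
  have hone : (1 : R) ∈ closure (I : Set R) := by
    rw [← coe_closure, hclosure]
    trivial
  obtain ⟨x, hxI, hx⟩ := Metric.mem_closure_iff.1 hone 1 one_pos
  rw [dist_eq_norm] at hx
  have htop := I.asIdeal.eq_top_of_norm_lt_one (mem_asIdeal.2 hxI) hx
  exact I.one_mem_iff.1 (mem_asIdeal.1 (htop ▸ Submodule.mem_top))

end TwoSidedIdeal

section Trace

variable {A : Type*} [CStarAlgebra A] [PartialOrder A]

theorem PositiveLinearMap.abs_re_apply_conjugate_le [StarOrderedRing A] (τ : A →ₚ[ℂ] ℂ) {k : A}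
    (hk : IsSelfAdjoint k) (w : A) :
    |(τ (k * w * k)).re| ≤ ‖(ℜ w : A)‖ * (τ (k * k)).re := by
  set v : A := (ℜ w : A)
  have hv : IsSelfAdjoint v := (ℜ w).2
  have hre : τ (k * v * k) = (τ (k * w * k)).re := by
    have : k * v * k = ℜ (k * w * k) := by
      simp only [v, realPart_apply_coe, star_mul, hk.star_eq, mul_smul_comm, smul_mul_assoc,
        mul_add, add_mul, mul_assoc]
    rw [this, map_realPart, Complex.coe_realPart]
  have hscale (r : ℝ) : τ (k * algebraMap ℝ A r * k) = r * τ (k * k) := by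
    rw [Algebra.algebraMap_eq_smul_one, mul_smul_comm, mul_one, smul_mul_assoc,
      PositiveLinearMap.map_smul_of_tower, Complex.real_smul]
  have hupper : τ (k * v * k) ≤ ‖v‖ * τ (k * k) :=
    hscale ‖v‖ ▸ OrderHomClass.mono τ (hk.conjugate_le_conjugate hv.le_algebraMap_norm_self)
  have hlower : -‖v‖ * τ (k * k) ≤ τ (k * v * k) := by
    have := OrderHomClass.mono τ (hk.conjugate_le_conjugate hv.neg_algebraMap_norm_le_self)
    rwa [mul_neg, neg_mul, map_neg, hscale, ← neg_mul] at this
  rw [hre] at hupper hlower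
  have hu := (Complex.le_def.1 hupper).1
  have hl := (Complex.le_def.1 hlower).1
  simp only [Complex.ofReal_re, Complex.re_ofReal_mul, neg_mul, Complex.neg_re] at hu hl
  exact abs_le.2 ⟨by linarith, hu⟩


def traceDominated (h : A) : AddSubgroup A where
  carrier := {a | ∃ C : ℝ, ∀ τ : A →ₚ[ℂ] ℂ, (∀ x y, τ (x * y) = τ (y * x)) →
    |(τ a).re| ≤ C * (τ h).re}
  zero_mem' := ⟨0, by simp⟩
  add_mem' := by
    rintro a b ⟨C, hC⟩ ⟨D, hD⟩
    refine ⟨C + D, fun τ hτ ↦ ?_⟩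
    rw [map_add, Complex.add_re, add_mul]
    exact (abs_add_le _ _).trans (add_le_add (hC τ hτ) (hD τ hτ))
  neg_mem' := by
    rintro a ⟨C, hC⟩
    exact ⟨C, fun τ hτ ↦ by simpa using hC τ hτ⟩

theorem mul_mul_mem_traceDominated [StarOrderedRing A] {h : A} (hh : 0 ≤ h) (x y : A) :
    x * h * y ∈ traceDominated h := by
  obtain ⟨k, hk, rfl⟩ := CStarAlgebra.nonneg_iff_exists_isSelfAdjoint_and_eq_mul_self.1 hh
  refine ⟨‖(ℜ (y * x) : A)‖, fun τ hτ ↦ ?_⟩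
  have hcycle : τ (x * (k * k) * y) = τ (k * (y * x) * k) := by
    rw [show x * (k * k) * y = (x * k) * (k * y) by noncomm_ring, hτ]
    congr 1
    noncomm_ring
  rw [hcycle]
  exact τ.abs_re_apply_conjugate_le hk _

theorem mem_traceDominated_of_mem_span_singleton [StarOrderedRing A] {h z : A} (hh : 0 ≤ h)
    (hz : z ∈ TwoSidedIdeal.span {h}) : z ∈ traceDominated h := by
  rw [TwoSidedIdeal.mem_span_iff_mem_addSubgroup_closure] at hz
  refine AddSubgroup.closure_le _ |>.2 ?_ hz
  rintro _ ⟨_, ⟨x, -, _, rfl, rfl⟩, y, -, rfl⟩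
  exact mul_mul_mem_traceDominated hh x y

theorem exists_pos_le_of_one_mem_traceDominated {h : A} (hh : 0 ≤ h)
    (hone : 1 ∈ traceDominated h) :
    ∃ ν : ℝ, 0 < ν ∧ ∀ τ : A →ₚ[ℂ] ℂ, τ 1 = 1 → (∀ x y, τ (x * y) = τ (y * x)) →
      (ν : ℂ) ≤ τ h := by
  obtain ⟨C, hC⟩ := hone
  refine ⟨(max C 1)⁻¹, by positivity, fun τ hτ1 hτ ↦ ?_⟩
  have hbound := hC τ hτ
  obtain ⟨hre, him⟩ := Complex.nonneg_iff.1 (τ.map_nonneg hh)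
  rw [hτ1, Complex.one_re, abs_one] at hbound
  refine Complex.le_def.2 ⟨?_, by simpa using him⟩
  rw [Complex.ofReal_re, inv_le_iff_one_le_mul₀' (by positivity)]
  exact hbound.trans (mul_le_mul_of_nonneg_right (le_max_left C 1) hre)

end Trace

/-- On a unital C*-algebra whose only closed two-sided ideals are `{0}`
and the whole algebra, every nonzero positive element has trace bounded below by some
`ν > 0` uniformly over all tracial states. -/
theorem stmt11 {A : Type*} [CStarAlgebra A]
    (hsimple : ∀ I : TwoSidedIdeal A, IsClosed (I : Set A) → I = ⊥ ∨ I = ⊤)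
    (h : A) (hne : h ≠ 0) (hpos : ∃ b : A, h = star b * b) :
    ∃ ν : ℝ, 0 < ν ∧
      ∀ τ : A →L[ℂ] ℂ, τ 1 = 1 → (∀ a : A, 0 ≤ τ (star a * a)) →
        (∀ a b : A, τ (a * b) = τ (b * a)) → (ν : ℂ) ≤ τ h := by
  let := CStarAlgebra.spectralOrder A
  have := CStarAlgebra.spectralOrderedRing A
  have hh : 0 ≤ h := CStarAlgebra.nonneg_iff_eq_star_mul_self.2 hpos
  have hspan : TwoSidedIdeal.span {h} = ⊤ :=
    TwoSidedIdeal.eq_top_of_ne_bot_of_forall_isClosed hsimple fun hbot ↦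
      hne <| (TwoSidedIdeal.mem_bot A).1 (hbot ▸ TwoSidedIdeal.subset_span rfl)
  obtain ⟨ν, hν, hle⟩ := exists_pos_le_of_one_mem_traceDominated hh <|
    mem_traceDominated_of_mem_span_singleton hh (hspan ▸ trivial)
  refine ⟨ν, hν, fun τ hτ1 hτpos hτ ↦ hle (.mk₀ τ fun x hx ↦ ?_) hτ1 hτ⟩
  obtain ⟨s, rfl⟩ := CStarAlgebra.nonneg_iff_eq_star_mul_self.1 hx
  exact hτpos s
end

section
/- Let A be a unital C*-algebra, k ≥ 1, and let φ, ψ : M_k(ℂ) → A be unital *-homomorphisms from the C*-algebra of k×k complex matrices into A that are approximately unitarily equivalent. Then there exists a unitary u ∈ A with φ(x) = u ψ(x) u* for all x ∈ M_k(ℂ). -/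
/-!
Fix a matrix unit index `i₀`. For any `u`, the element `a = ∑ᵢ φ(eᵢᵢ₀) u ψ(eᵢ₀ᵢ)` intertwines
`φ` and `ψ`, i.e. `φ x * a = a * ψ x`, and `a - u = ∑ᵢ φ(eᵢᵢ₀) (u ψ(eᵢ₀ᵢ) - φ(eᵢ₀ᵢ) u)`. Taking
for `u` a unitary that conjugates `ψ` close enough to `φ` on the `eᵢ₀ᵢ` makes `‖a - u‖ < 1`, so
`a` is invertible. Since `φ`, `ψ` are `*`-homomorphisms, `ψ x` commutes with `a⋆a`, hence with `|a|`,
and the unitary `a |a|⁻¹` of the polar decomposition of `a` still intertwines `φ` and `ψ`.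
-/

open Matrix Finset
open scoped Ring

theorem Matrix.sum_single_self_one {n R : Type*} [Fintype n] [DecidableEq n] [Semiring R] :
    ∑ i : n, single i i (1 : R) = 1 := by
  conv_rhs => rw [matrix_eq_sum_single (1 : Matrix n n R)]
  refine sum_congr rfl fun i _ => ?_
  rw [sum_eq_single i (fun j _ hji => by simp [one_apply_ne' hji]) (by simp), one_apply_eq]

theorem Commute.ringInverse_right {M₀ : Type*} [MonoidWithZero M₀] {a b : M₀} (h : Commute a b) :
    Commute a b⁻¹ʳ := by
  by_cases hb : IsUnit b
  · rw [← hb.unit_spec, Ring.inverse_unit]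
    exact (hb.unit_spec ▸ h).units_inv_right
  · rw [Ring.inverse_non_unit b hb]
    exact .zero_right a

section MatrixUnitAverage

variable {R n A F : Type*} [CommSemiring R] [Fintype n] [DecidableEq n] [Semiring A]
  [Algebra R A] [FunLike F (Matrix n n R) A] [AlgHomClass F R (Matrix n n R) A]
  (φ ψ : F) (i₀ : n) (u : A)

def matrixUnitAverage : A := ∑ i, φ (single i i₀ 1) * u * ψ (single i₀ i 1)

theorem map_single_mul_matrixUnitAverage (p q : n) :
    φ (single p q 1) * matrixUnitAverage φ ψ i₀ u = φ (single p i₀ 1) * u * ψ (single i₀ q 1) := by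
  rw [matrixUnitAverage, mul_sum, sum_eq_single q]
  · rw [← mul_assoc, ← mul_assoc, ← map_mul, single_mul_single_same, one_mul]
  · intro i _ hiq
    rw [← mul_assoc, ← mul_assoc, ← map_mul, single_mul_single_of_ne (h := hiq.symm), map_zero,
      zero_mul, zero_mul]
  · simp

theorem matrixUnitAverage_mul_map_single (p q : n) :
    matrixUnitAverage φ ψ i₀ u * ψ (single p q 1) = φ (single p i₀ 1) * u * ψ (single i₀ q 1) := by
  rw [matrixUnitAverage, sum_mul, sum_eq_single p]
  · rw [mul_assoc, ← map_mul, single_mul_single_same, one_mul]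
  · intro i _ hip
    rw [mul_assoc, ← map_mul, single_mul_single_of_ne (h := hip), map_zero, mul_zero]
  · simp

theorem map_mul_matrixUnitAverage (x : Matrix n n R) :
    φ x * matrixUnitAverage φ ψ i₀ u = matrixUnitAverage φ ψ i₀ u * ψ x := by
  induction x using Matrix.induction_on' with
  | h_zero => simp
  | h_add x y hx hy => rw [map_add, map_add, add_mul, mul_add, hx, hy]
  | h_std_basis p q c =>
    have hc : single p q c = c • single p q (1 : R) := by rw [smul_single, smul_eq_mul, mul_one]
    rw [hc, map_smul, map_smul, smul_mul_assoc,
      mul_smul_comm, map_single_mul_matrixUnitAverage, matrixUnitAverage_mul_map_single]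

end MatrixUnitAverage

theorem matrixUnitAverage_sub {R n A F : Type*} [CommSemiring R] [Fintype n] [DecidableEq n]
    [Ring A] [Algebra R A] [FunLike F (Matrix n n R) A] [AlgHomClass F R (Matrix n n R) A]
    (φ ψ : F) (i₀ : n) (u : A) :
    matrixUnitAverage φ ψ i₀ u - u =
      ∑ i, φ (single i i₀ 1) * (u * ψ (single i₀ i 1) - φ (single i₀ i 1) * u) := by
  have hu : u = ∑ i, φ (single i i₀ 1) * (φ (single i₀ i 1) * u) := by
    simp_rw [← mul_assoc, ← map_mul, single_mul_single_same, one_mul, ← sum_mul, ← map_sum,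
      sum_single_self_one, map_one, one_mul]
  conv_lhs => arg 2; rw [hu]
  simp_rw [matrixUnitAverage, ← sum_sub_distrib, mul_sub, mul_assoc]

section CStarAlgebra

variable {A : Type*} [CStarAlgebra A]

theorem isUnit_of_norm_sub_lt_one {a u : A} (hu : u ∈ unitary A) (h : ‖a - u‖ < 1) :
    IsUnit a := by
  nontriviality A
  have h' : ‖a - (Unitary.toUnits ⟨u, hu⟩ : A)‖ < ‖(↑(Unitary.toUnits ⟨u, hu⟩)⁻¹ : A)‖⁻¹ := by
    simpa [CStarRing.norm_of_mem_unitary hu] using h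
  simpa using ((Unitary.toUnits ⟨u, hu⟩).ofNearby a h').isUnit

theorem norm_matrixUnitAverage_sub_le {n F : Type*} [Fintype n] [DecidableEq n]
    [FunLike F (Matrix n n ℂ) A] [AlgHomClass F ℂ (Matrix n n ℂ) A] (φ ψ : F) (i₀ : n) {u : A}
    (hu : u ∈ unitary A) {ε : ℝ}
    (h : ∀ i, ‖φ (single i₀ i 1) - u * ψ (single i₀ i 1) * star u‖ ≤ ε) :
    ‖matrixUnitAverage φ ψ i₀ u - u‖ ≤ (∑ i, ‖φ (single i i₀ 1)‖) * ε := by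
  rw [matrixUnitAverage_sub, sum_mul]
  refine (norm_sum_le _ _).trans (sum_le_sum fun i _ => (norm_mul_le _ _).trans ?_)
  gcongr
  have : u * ψ (single i₀ i 1) - φ (single i₀ i 1) * u =
      -((φ (single i₀ i 1) - u * ψ (single i₀ i 1) * star u) * u) := by
    rw [sub_mul, mul_assoc _ (star u), Unitary.star_mul_self_of_mem hu, mul_one, neg_sub]
  rw [this, norm_neg, CStarRing.norm_mul_mem_unitary _ hu]
  exact h i

variable [PartialOrder A] [StarOrderedRing A]

/-- The unitary factor of the polar decomposition `a = polarUnitary a * |a|` of an invertible `a`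
(for non-invertible `a`, `Ring.inverse` makes it `0`). -/
noncomputable def polarUnitary (a : A) : A := a * (CFC.abs a)⁻¹ʳ

theorem IsUnit.cfcAbs {a : A} (ha : IsUnit a) : IsUnit (CFC.abs a) := by
  rw [← isUnit_mul_self_iff, CFC.abs_mul_abs]
  exact ha.star.mul ha

theorem polarUnitary_mem_unitary {a : A} (ha : IsUnit a) : polarUnitary a ∈ unitary A := by
  have habs := ha.cfcAbs
  have hsa : IsSelfAdjoint (CFC.abs a)⁻¹ʳ :=
    (IsSelfAdjoint.of_nonneg (CFC.abs_nonneg a)).ringInverse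
  rw [polarUnitary, (ha.mul habs.ringInverse).mem_unitary_iff_star_mul_self, star_mul,
    hsa.star_eq, mul_assoc, ← mul_assoc (star a), ← CFC.abs_mul_abs, ← mul_assoc, ← mul_assoc,
    Ring.inverse_mul_cancel _ habs, one_mul, Ring.mul_inverse_cancel _ habs]

theorem eq_polarUnitary_mul_mul_star {a x y : A} (ha : IsUnit a) (h : x * a = a * y)
    (h' : star x * a = a * star y) : x = polarUnitary a * y * star (polarUnitary a) := by
  have hstar : star a * x = y * star a := by simpa using congrArg star h'
  have hcomm : Commute (star a * a) y := by
    calc star a * a * y = star a * x * a := by rw [mul_assoc, ← h, mul_assoc]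
      _ = y * (star a * a) := by rw [hstar, mul_assoc]
  have habs : Commute y (CFC.abs a) := (hcomm.cfcₙ_nnreal _).symm
  have hv : x * polarUnitary a = polarUnitary a * y := by
    rw [polarUnitary, ← mul_assoc, h, mul_assoc, habs.ringInverse_right.eq, mul_assoc]
  rw [← hv, mul_assoc, Unitary.mul_star_self_of_mem (polarUnitary_mem_unitary ha), mul_one]

end CStarAlgebra

/-- Two approximately unitarily equivalent unital *-homomorphisms from a
matrix algebra `M_k(ℂ)` (`k ≥ 1`) into a unital C*-algebra are exactly unitarily
equivalent. -/
theorem stmt12 {A : Type*} [CStarAlgebra A] (k : ℕ) (hk : 1 ≤ k)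
    (φ ψ : Matrix (Fin k) (Fin k) ℂ →⋆ₐ[ℂ] A)
    (haue : ∀ (F : Finset (Matrix (Fin k) (Fin k) ℂ)) (ε : ℝ), 0 < ε →
      ∃ u : A, u ∈ unitary A ∧ ∀ x ∈ F, ‖φ x - u * ψ x * star u‖ < ε) :
    ∃ u : A, u ∈ unitary A ∧ ∀ x : Matrix (Fin k) (Fin k) ℂ, φ x = u * ψ x * star u := by
  have i₀ : Fin k := ⟨0, hk⟩
  obtain ⟨u, hu, hclose⟩ := haue (univ.image fun i => single i₀ i 1)
    (∑ i, ‖φ (single i i₀ 1)‖ + 1)⁻¹ (by positivity)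
  have hnear : ‖matrixUnitAverage φ ψ i₀ u - u‖ < 1 := by
    refine (norm_matrixUnitAverage_sub_le φ ψ i₀ hu fun i =>
      (hclose _ (mem_image_of_mem _ (mem_univ i))).le).trans_lt ?_
    rw [← div_eq_mul_inv, div_lt_one (by positivity)]
    exact lt_add_one _
  have ha := isUnit_of_norm_sub_lt_one hu hnear
  let _ := CStarAlgebra.spectralOrder A
  have := CStarAlgebra.spectralOrderedRing A
  refine ⟨polarUnitary _, polarUnitary_mem_unitary ha, fun x =>
    eq_polarUnitary_mul_mul_star ha (map_mul_matrixUnitAverage φ ψ i₀ u x) ?_⟩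
  simpa only [map_star] using map_mul_matrixUnitAverage φ ψ i₀ u (star x)
end
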